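/- For the Moran walk with parameter p ∈ (0,1) and q = 1 − p, for every n ≥ 1 the final altitude satisfies E[Y_n] = (p/q)(1 − p^n) and Var[Y_n] = (p/q²)·(1 − p^n(p^{n+1} + (1+2n)q)). -/

import Mathlib

/-- Altitude of the Moran walk after `j` steps: `true` means an up-step (+1),
`false` means a reset to altitude 0. -/
def moranY (ω : ℕ → Bool) : ℕ → ℕ
  | 0 => 0
  | j + 1 => if ω j then moranY ω j + 1 else 0

/-- Expectation of the functional `f` under the product measure on Moran walks of
length `n`, where an up-step has weight `p` and a reset has weight `1 - p`. -/
noncomputable def moranE (p : ℝ) (n : ℕ) (f : (ℕ → Bool) → ℝ) : ℝ :=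
  ∑ ω : Fin n → Bool,
    (∏ i, if ω i then p else 1 - p) *
      f (fun j => if h : j < n then ω ⟨j, h⟩ else false)

lemma moranY_congr (ω ω' : ℕ → Bool) :
    ∀ n, (∀ j, j < n → ω j = ω' j) → moranY ω n = moranY ω' n
  | 0, _ => rfl
  | n + 1, h => by
    simp only [moranY, h n (Nat.lt_succ_self n),
      moranY_congr ω ω' n (fun j hj => h j (hj.trans (Nat.lt_succ_self n)))]

lemma moranE_succ (p : ℝ) (n : ℕ) (F : ℕ → ℝ) :
    moranE p (n + 1) (fun Y => F (moranY Y (n + 1)))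
      = p * moranE p n (fun Y => F (moranY Y n + 1))
        + (1 - p) * moranE p n (fun Y => F 0) := by
  unfold moranE
  rw [← Equiv.sum_comp (Fin.insertNthEquiv (fun _ => Bool) (Fin.last n))]
  rw [Fintype.sum_prod_type]
  rw [Fintype.sum_bool]
  have key : ∀ (b : Bool) (ω : Fin n → Bool),
      (∏ i, if (Fin.insertNthEquiv (fun _ => Bool) (Fin.last n)) (b, ω) i then p else 1 - p)
        = (if b then p else 1 - p) * ∏ i, (if ω i then p else 1 - p) := by
    intro b ω
    rw [Fin.prod_univ_succAbove _ (Fin.last n)]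
    simp [Fin.insertNthEquiv]
  have keyY : ∀ (b : Bool) (ω : Fin n → Bool),
      moranY (fun j => if h : j < n + 1 then
          (Fin.insertNthEquiv (fun _ => Bool) (Fin.last n)) (b, ω) ⟨j, h⟩ else false) (n + 1)
        = if b then moranY (fun j => if h : j < n then ω ⟨j, h⟩ else false) n + 1 else 0 := by
    intro b ω
    have hmid : moranY (fun j => if h : j < n + 1 then
        (Fin.insertNthEquiv (fun _ => Bool) (Fin.last n)) (b, ω) ⟨j, h⟩ else false) n
        = moranY (fun j => if h : j < n then ω ⟨j, h⟩ else false) n := by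
      apply moranY_congr
      intro j hj
      have hj1 : j < n + 1 := hj.trans (Nat.lt_succ_self n)
      have : (⟨j, hj1⟩ : Fin (n + 1)) = (Fin.last n).succAbove ⟨j, hj⟩ := by
        rw [Fin.succAbove_last]; rfl
      simp only [hj, hj1, dif_pos, Fin.insertNthEquiv, Equiv.coe_fn_mk, this,
        Fin.insertNth_apply_succAbove]
    have hlast : (fun j => if h : j < n + 1 then
        (Fin.insertNthEquiv (fun _ => Bool) (Fin.last n)) (b, ω) ⟨j, h⟩ else false) n = b := by
      have hn : n < n + 1 := Nat.lt_succ_self n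
      have : (⟨n, hn⟩ : Fin (n + 1)) = Fin.last n := rfl
      simp only [hn, dif_pos, Fin.insertNthEquiv, Equiv.coe_fn_mk, this,
        Fin.insertNth_apply_same]
    show (if _ then _ else _) = _
    rw [hlast, hmid]
  simp only [key, keyY]
  simp only [if_true, if_false, Bool.false_eq_true]
  rw [Finset.mul_sum, Finset.mul_sum]
  congr 1
  · exact Finset.sum_congr rfl fun ω _ => by ring
  · exact Finset.sum_congr rfl fun ω _ => by ring

lemma moranE_const (p : ℝ) (n : ℕ) (c : ℝ) : moranE p n (fun _ => c) = c := by
  induction n with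
  | zero =>
    unfold moranE
    simp
  | succ n ih =>
    have := moranE_succ p n (fun _ => c)
    rw [this, ih]
    ring

lemma moranE_add (p : ℝ) (n : ℕ) (f g : (ℕ → Bool) → ℝ) :
    moranE p n (fun ω => f ω + g ω) = moranE p n f + moranE p n g := by
  unfold moranE
  rw [← Finset.sum_add_distrib]
  exact Finset.sum_congr rfl fun ω _ => by ring

lemma moranE_smul (p : ℝ) (n : ℕ) (c : ℝ) (f : (ℕ → Bool) → ℝ) :
    moranE p n (fun ω => c * f ω) = c * moranE p n f := by
  unfold moranE
  rw [Finset.mul_sum]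
  exact Finset.sum_congr rfl fun ω _ => by ring

lemma moran_mean_sq (p : ℝ) (hp1 : p ≠ 1) (n : ℕ) :
    moranE p n (fun Y => (moranY Y n : ℝ)) = (p / (1 - p)) * (1 - p ^ n)
    ∧ moranE p n (fun Y => ((moranY Y n : ℝ)) ^ 2)
        = (p / (1 - p) ^ 2) * (1 - p ^ n * (p ^ (n + 1) + (1 + 2 * (n : ℝ)) * (1 - p)))
          + ((p / (1 - p)) * (1 - p ^ n)) ^ 2 := by
  have hq : (1 : ℝ) - p ≠ 0 := sub_ne_zero.mpr (Ne.symm hp1)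
  induction n with
  | zero =>
    have e1 : moranE p 0 (fun Y => (moranY Y 0 : ℝ)) = 0 := by
      have h : (fun (Y : ℕ → Bool) => ((moranY Y 0 : ℝ))) = fun _ => (0 : ℝ) := by
        funext Y; simp [moranY]
      rw [h, moranE_const]
    have e2 : moranE p 0 (fun Y => ((moranY Y 0 : ℝ)) ^ 2) = 0 := by
      have h : (fun (Y : ℕ → Bool) => ((moranY Y 0 : ℝ)) ^ 2) = fun _ => (0 : ℝ) := by
        funext Y; simp [moranY]
      rw [h, moranE_const]
    refine ⟨by rw [e1]; simp, ?_⟩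
    rw [e2]
    push_cast
    ring
  | succ n ih =>
    obtain ⟨ihE, ihS⟩ := ih
    have hE1 := moranE_succ p n (fun k => (k : ℝ))
    have hE2 := moranE_succ p n (fun k => (k : ℝ) ^ 2)
    simp only [Nat.cast_add, Nat.cast_one, Nat.cast_zero] at hE1 hE2
    have hadd1 : moranE p n (fun Y => (moranY Y n : ℝ) + 1)
        = moranE p n (fun Y => (moranY Y n : ℝ)) + 1 := by
      rw [moranE_add p n _ (fun _ => (1:ℝ)), moranE_const]
    have hsq : moranE p n (fun Y => ((moranY Y n : ℝ) + 1) ^ 2)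
        = moranE p n (fun Y => ((moranY Y n : ℝ)) ^ 2)
          + 2 * moranE p n (fun Y => (moranY Y n : ℝ)) + 1 := by
      have : (fun Y => ((moranY Y n : ℝ) + 1) ^ 2)
          = fun Y => ((moranY Y n : ℝ)) ^ 2 + (2 * (moranY Y n : ℝ) + 1) := by
        funext Y; ring
      rw [this, moranE_add, moranE_add p n _ (fun _ => (1:ℝ)), moranE_const,
        moranE_smul]
      ring
    constructor
    · rw [hE1, hadd1, ihE, moranE_const]
      linear_combination (-p) * mul_inv_cancel₀ hq
    · rw [hE2, hsq, ihE, ihS, moranE_const]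
      push_cast
      field_simp
      ring

/-- For the Moran walk with parameter `p ∈ (0,1)` and `q = 1 - p`,
`E[Y_n] = (p/q)(1 - p^n)` and `Var[Y_n] = (p/q²)(1 - p^n (p^{n+1} + (1+2n) q))`. -/
theorem moranWalk_finalAltitude_mean_variance
    (p : ℝ) (hp0 : 0 < p) (hp1 : p < 1) (q : ℝ) (hq : q = 1 - p)
    (n : ℕ) (hn : 1 ≤ n) :
    moranE p n (fun Y => (moranY Y n : ℝ)) = (p / q) * (1 - p ^ n)
    ∧ moranE p n (fun Y => ((moranY Y n : ℝ)) ^ 2)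
        - (moranE p n (fun Y => (moranY Y n : ℝ))) ^ 2
        = (p / q ^ 2) * (1 - p ^ n * (p ^ (n + 1) + (1 + 2 * (n : ℝ)) * q)) := by
  subst hq
  obtain ⟨h1, h2⟩ := moran_mean_sq p (ne_of_lt hp1) n
  exact ⟨h1, by rw [h2, h1]; ring⟩
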